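/- arXiv:nlin/0611046 — 2 statements merged into one kernel-verified Lean document; each statement's English description precedes it below -/
import Mathlib

section
/- The ultradiscrete tau function is integer-valued: fix Bethe data (L; i_1 < ... < i_g; m_i ≥ 1) satisfying the configuration condition p_i ≥ 0 for all i ∈ 𝕀, and integer angle data I_{i,1} ≤ ... ≤ I_{i,m_i} for each i ∈ 𝕀. Then for every r ∈ ℤ and k ∈ ℤ, the value τ_r(k) = max_{s ∈ ℤ^g/Mℤ^g} { Θ_{M^{-1}s}(I + M(r h_∞ - k h_1 - p/2)) + χ(s; Ĩ) } is an integer. -/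
open Matrix

/-!
Ultradiscrete tau function of the periodic box-ball system.  Bethe data: a system
size `L`, distinct positive integers `i₁ < … < i_g` (a strictly monotone
`ι : Fin g → ℕ` with positive values), multiplicities `m : Fin g → ℕ` (`m a ≥ 1`),
and angle data `I_{i,1} ≤ … ≤ I_{i,m_i}` (`Iv : (a : Fin g) → Fin (m a) → ℤ`,
monotone in the second argument).
-/

/-- The vacancy number `p_i = L - 2 Σ_{j∈𝕀} min(i,j) m_j`. -/
def vacancy (L g : ℕ) (ι m : Fin g → ℕ) (a : Fin g) : ℤ :=
  (L : ℤ) - 2 * ∑ b : Fin g, (min (ι a) (ι b) : ℤ) * m b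

/-- The period matrix `Ω = M F`, `Ω_{ij} = δ_{ij} p_i m_i + 2 min(i,j) m_i m_j`;
it is symmetric positive definite. -/
noncomputable def periodMatrix (L g : ℕ) (ι m : Fin g → ℕ) :
    Matrix (Fin g) (Fin g) ℝ :=
  Matrix.of fun a b =>
    (if a = b then (vacancy L g ι m a : ℝ) * m a else 0) +
      2 * (min (ι a) (ι b) : ℝ) * m a * m b

/-- The quadratic form `(n+a)ᵀ Ω (n+a)/2 + (n+a)ᵀ z`, `n ∈ ℤ^g`. -/
noncomputable def qform {g : ℕ} (Ω : Matrix (Fin g) (Fin g) ℝ) (a z : Fin g → ℝ)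
    (n : Fin g → ℤ) : ℝ :=
  (((fun i => (n i : ℝ)) + a) ⬝ᵥ Ω.mulVec ((fun i => (n i : ℝ)) + a)) / 2 +
    ((fun i => (n i : ℝ)) + a) ⬝ᵥ z

/-- The ultradiscrete Riemann theta function
`Θ_a(z) = -min_{n ∈ ℤ^g} {(n+a)ᵀΩ(n+a)/2 + (n+a)ᵀz}`. -/
noncomputable def Theta {g : ℕ} (Ω : Matrix (Fin g) (Fin g) ℝ) (a z : Fin g → ℝ) : ℝ :=
  -sInf (Set.range (qform Ω a z))

/-- The argument `I + M (r h_∞ - k h_1 - p/2)` of the theta function, where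
`h_j = (min(i,j))_{i∈𝕀}`, `h_∞ = (i)_{i∈𝕀}`, `M = diag(m_i)`,
`I = (Σ_α I_{i,α})_{i∈𝕀}` and `p = (p_i)_{i∈𝕀}`. -/
noncomputable def zvec (L g : ℕ) (ι m : Fin g → ℕ)
    (Iv : (a : Fin g) → Fin (m a) → ℤ) (r k : ℤ) : Fin g → ℝ :=
  fun a => (∑ α : Fin (m a), (Iv a α : ℝ)) +
    (m a : ℝ) * ((r : ℝ) * (ι a : ℝ) - (k : ℝ) * ((min (ι a) 1 : ℕ) : ℝ) -
      (vacancy L g ι m a : ℝ) / 2)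

/-- The function `χ(s; Ĩ)` for the representative `s` with `0 ≤ s_i < m_i` of a
class in `ℤ^g/Mℤ^g`:
`χ(s;Ĩ) = Σ_{i∈𝕀} (1/m_i) Σ_{1 ≤ α ≤ s_i < β ≤ m_i} (I_{i,β} - I_{i,α} - p_i/2)`
(written here with `0`-based indices `α, β`). -/
noncomputable def chi (L g : ℕ) (ι m : Fin g → ℕ)
    (Iv : (a : Fin g) → Fin (m a) → ℤ) (s : ∀ a, Fin (m a)) : ℝ :=
  ∑ a : Fin g, (1 / (m a : ℝ)) *
    ∑ α : Fin (m a), ∑ β : Fin (m a),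
      if (α : ℕ) < (s a : ℕ) ∧ (s a : ℕ) ≤ (β : ℕ) then
        (Iv a β : ℝ) - (Iv a α : ℝ) - (vacancy L g ι m a : ℝ) / 2
      else 0

/-- The ultradiscrete tau function
`τ_r(k) = max_{s ∈ ℤ^g/Mℤ^g} { Θ_{M⁻¹s}(I + M(r h_∞ - k h_1 - p/2)) + χ(s; Ĩ) }`,
the classes of `ℤ^g/Mℤ^g` being represented by `s` with `0 ≤ s_i < m_i`
(so the characteristic is `M⁻¹ s = (s_i/m_i)_{i∈𝕀}`). -/
noncomputable def tau (L g : ℕ) (ι m : Fin g → ℕ)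
    (Iv : (a : Fin g) → Fin (m a) → ℤ) (r k : ℤ) : ℝ :=
  ⨆ s : ∀ a, Fin (m a),
    Theta (periodMatrix L g ι m) (fun a => ((s a : ℕ) : ℝ) / (m a : ℝ))
      (zvec L g ι m Iv r k) + chi L g ι m Iv s


lemma count_range (T v : ℕ) (hv : v ≤ T) :
    ∑ t ∈ Finset.range T, (if t < v then (1:ℝ) else 0) = v := by
  rw [Finset.sum_boole]
  congr 1
  have : Finset.filter (fun t => t < v) (Finset.range T) = Finset.range v := by
    ext t; simp [Finset.mem_range]; omega
  rw [this, Finset.card_range]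

lemma count_lt (M v : ℕ) (hv : v ≤ M) :
    ∑ α : Fin M, (if (α:ℕ) < v then (1:ℝ) else 0) = v := by
  rw [Fin.sum_univ_eq_sum_range (fun i => if i < v then (1:ℝ) else 0)]
  exact count_range M v hv

lemma count_ge (M v : ℕ) (hv : v ≤ M) :
    ∑ α : Fin M, (if v ≤ (α:ℕ) then (1:ℝ) else 0) = (M:ℝ) - v := by
  have h : ∀ α : Fin M, (if v ≤ (α:ℕ) then (1:ℝ) else 0)
      = 1 - (if (α:ℕ) < v then (1:ℝ) else 0) := by
    intro α; by_cases h : (α:ℕ) < v <;> simp [h, Nat.not_le.2, Nat.le_of_not_lt] <;> omega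
  simp only [h]
  rw [Finset.sum_sub_distrib, count_lt M v hv, Finset.sum_const, Finset.card_univ,
    Fintype.card_fin]
  simp

lemma per_index (M : ℕ) (hM : 0 < M) (s : Fin M) (I : Fin M → ℤ) (p c n : ℤ) :
    ∃ E : ℤ,
      (1/(M:ℝ)) * (∑ α : Fin M, ∑ β : Fin M,
        if (α:ℕ) < (s:ℕ) ∧ (s:ℕ) ≤ (β:ℕ) then (I β:ℝ) - (I α:ℝ) - (p:ℝ)/2 else 0)
      - (p:ℝ) * ((M:ℝ)*(n:ℝ) + ((s:ℕ):ℝ))^2/(2*(M:ℝ))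
      - ((M:ℝ)*(n:ℝ) + ((s:ℕ):ℝ)) *
          ((∑ α : Fin M, (I α:ℝ)) + (M:ℝ)*((c:ℝ) - (p:ℝ)/2))/(M:ℝ)
      = (E:ℝ) := by
  have hM0 : (M:ℝ) ≠ 0 := Nat.cast_ne_zero.2 hM.ne'
  have hsM : (s:ℕ) ≤ M := s.is_lt.le
  set AZ : ℤ := ∑ α : Fin M, (if (α:ℕ) < (s:ℕ) then I α else 0) with hAZ
  set BZ : ℤ := ∑ α : Fin M, (if (s:ℕ) ≤ (α:ℕ) then I α else 0) with hBZ
  have hA : ((AZ:ℤ):ℝ) = ∑ α : Fin M, (if (α:ℕ) < (s:ℕ) then (I α:ℝ) else 0) := by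
    rw [hAZ]; push_cast [apply_ite (Int.cast : ℤ → ℝ)]; rfl
  have hB : ((BZ:ℤ):ℝ) = ∑ α : Fin M, (if (s:ℕ) ≤ (α:ℕ) then (I α:ℝ) else 0) := by
    rw [hBZ]; push_cast [apply_ite (Int.cast : ℤ → ℝ)]; rfl
  have hsplit : ∑ α : Fin M, (I α:ℝ) = (AZ:ℝ) + (BZ:ℝ) := by
    rw [hA, hB, ← Finset.sum_add_distrib]
    apply Finset.sum_congr rfl
    intro α _
    by_cases h : (α:ℕ) < (s:ℕ) <;> simp [h, Nat.le_of_not_lt] <;> omega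
  have hptwise : ∀ α β : Fin M,
      (if (α:ℕ) < (s:ℕ) ∧ (s:ℕ) ≤ (β:ℕ) then (I β:ℝ) - (I α:ℝ) - (p:ℝ)/2 else 0)
      = (if (α:ℕ) < (s:ℕ) then (1:ℝ) else 0) * (if (s:ℕ) ≤ (β:ℕ) then (I β:ℝ) else 0)
        - (if (α:ℕ) < (s:ℕ) then (I α:ℝ) else 0) * (if (s:ℕ) ≤ (β:ℕ) then (1:ℝ) else 0)
        - ((p:ℝ)/2 * (if (α:ℕ) < (s:ℕ) then (1:ℝ) else 0))
            * (if (s:ℕ) ≤ (β:ℕ) then (1:ℝ) else 0) := by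
    intro α β
    by_cases h1 : (α:ℕ) < (s:ℕ) <;> by_cases h2 : (s:ℕ) ≤ (β:ℕ) <;>
      simp [h1, h2] <;> ring
  have hdouble : (∑ α : Fin M, ∑ β : Fin M,
      if (α:ℕ) < (s:ℕ) ∧ (s:ℕ) ≤ (β:ℕ) then (I β:ℝ) - (I α:ℝ) - (p:ℝ)/2 else 0)
      = ((s:ℕ):ℝ) * (BZ:ℝ) - ((M:ℝ) - ((s:ℕ):ℝ)) * (AZ:ℝ)
        - (p:ℝ)/2 * (((s:ℕ):ℝ) * ((M:ℝ) - ((s:ℕ):ℝ))) := by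
    simp only [hptwise, Finset.sum_sub_distrib]
    rw [← Finset.sum_mul_sum, ← Finset.sum_mul_sum, ← Finset.sum_mul_sum,
      ← Finset.mul_sum]
    rw [count_lt M (s:ℕ) hsM, count_ge M (s:ℕ) hsM, ← hA, ← hB]
    ring
  set t : ℤ := n*(n-1)/2 with htdef
  have ht : (2:ℤ)*t = n*(n-1) := Int.two_mul_ediv_two_of_even (Int.even_mul_pred_self n)
  have htr : (t:ℝ) = ((n:ℝ)^2 - (n:ℝ))/2 := by
    have : ((2*t:ℤ):ℝ) = ((n*(n-1):ℤ):ℝ) := by rw [ht]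
    push_cast at this
    linarith
  refine ⟨-AZ - n*(AZ+BZ) - p*(s:ℕ)*n - p*M*t - (M*n+(s:ℕ))*c, ?_⟩
  rw [hdouble, hsplit]
  push_cast
  rw [htr]
  field_simp
  ring

lemma qform_eval (L g : ℕ) (ι m : Fin g → ℕ) (hm : ∀ a, 1 ≤ m a) (z : Fin g → ℝ)
    (s : ∀ a, Fin (m a)) (n : Fin g → ℤ) :
    qform (periodMatrix L g ι m) (fun a => ((s a : ℕ):ℝ) / (m a : ℝ)) z n
    = (∑ a, (vacancy L g ι m a : ℝ) *
          ((m a:ℝ)*(n a:ℝ) + ((s a:ℕ):ℝ))^2/(2*(m a:ℝ)))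
      + (∑ a, ∑ b, (min (ι a) (ι b):ℝ) * ((m a:ℝ)*(n a:ℝ) + ((s a:ℕ):ℝ))
          * ((m b:ℝ)*(n b:ℝ) + ((s b:ℕ):ℝ)))
      + ∑ a, ((m a:ℝ)*(n a:ℝ) + ((s a:ℕ):ℝ)) * z a / (m a:ℝ) := by
  have hm0 : ∀ a, (m a : ℝ) ≠ 0 := fun a => Nat.cast_ne_zero.2 (Nat.one_le_iff_ne_zero.mp (hm a))
  simp only [qform, Matrix.mulVec, dotProduct, periodMatrix, Matrix.of_apply,
    Pi.add_apply]
  rw [Finset.sum_div, ← Finset.sum_add_distrib, ← Finset.sum_add_distrib,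
    ← Finset.sum_add_distrib]
  apply Finset.sum_congr rfl
  intro a _
  have h1 : (∑ b : Fin g, ((if a = b then (vacancy L g ι m a:ℝ) * (m a:ℝ) else 0)
        + 2 * (min ((ι a:ℕ):ℝ) ((ι b:ℕ):ℝ)) * (m a:ℝ) * (m b:ℝ))
        * ((n b:ℝ) + ((s b:ℕ):ℝ)/(m b:ℝ)))
      = (vacancy L g ι m a:ℝ) * (m a:ℝ) * ((n a:ℝ) + ((s a:ℕ):ℝ)/(m a:ℝ))
        + ∑ b : Fin g, 2 * (min ((ι a:ℕ):ℝ) ((ι b:ℕ):ℝ)) * (m a:ℝ) * (m b:ℝ)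
            * ((n b:ℝ) + ((s b:ℕ):ℝ)/(m b:ℝ)) := by
    simp only [add_mul, ite_mul, zero_mul]
    rw [Finset.sum_add_distrib, Finset.sum_ite_eq]
    simp
  rw [h1]
  have h3 : (∑ b : Fin g, (min ((ι a:ℕ):ℝ) ((ι b:ℕ):ℝ))
        * ((m a:ℝ)*(n a:ℝ) + ((s a:ℕ):ℝ)) * ((m b:ℝ)*(n b:ℝ) + ((s b:ℕ):ℝ)))
      = ((n a:ℝ) + ((s a:ℕ):ℝ)/(m a:ℝ)) * (∑ b : Fin g,
          2 * (min ((ι a:ℕ):ℝ) ((ι b:ℕ):ℝ)) * (m a:ℝ) * (m b:ℝ)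
            * ((n b:ℝ) + ((s b:ℕ):ℝ)/(m b:ℝ))) / 2 := by
    rw [Finset.mul_sum, Finset.sum_div]
    apply Finset.sum_congr rfl
    intro b _
    have ha := hm0 a
    have hb := hm0 b
    field_simp
  rw [h3]
  set S := ∑ b : Fin g, 2 * (min ((ι a:ℕ):ℝ) ((ι b:ℕ):ℝ)) * (m a:ℝ) * (m b:ℝ)
      * ((n b:ℝ) + ((s b:ℕ):ℝ)/(m b:ℝ)) with hS
  have ha := hm0 a
  field_simp

lemma F_lower (g : ℕ) (ι : Fin g → ℕ) (hι : StrictMono ι) (hιpos : ∀ a, 0 < ι a)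
    (m : Fin g → ℕ) (hm : ∀ a, 1 ≤ m a) (p : Fin g → ℤ) (hp : ∀ a, 0 ≤ p a)
    (z : Fin g → ℝ) :
    ∃ c : ℝ, ∀ lam : Fin g → ℝ,
      c ≤ (∑ a, (p a:ℝ) * (lam a)^2/(2*(m a:ℝ)))
        + (∑ a, ∑ b, (min ((ι a:ℕ):ℝ) ((ι b:ℕ):ℝ)) * lam a * lam b)
        + ∑ a, lam a * z a / (m a:ℝ) := by
  set T : ℕ := (Finset.univ.sup ι) + 1 with hTdef
  have hT : ∀ a, ι a < T := fun a =>
    Nat.lt_succ_of_le (Finset.le_sup (Finset.mem_univ a))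
  set Z : ℝ := ∑ a, |z a / (m a:ℝ)| with hZdef
  refine ⟨-(T:ℝ) * Z^2, ?_⟩
  intro lam
  set f : ℕ → ℝ := fun t => ∑ a, (if t < ι a then lam a else 0) with hfdef
  set S : ℝ := ∑ t ∈ Finset.range T, |f t| with hSdef
  have hS0 : 0 ≤ S := Finset.sum_nonneg fun t _ => abs_nonneg _
  -- Claim A
  have hkey : ∀ a b : Fin g, (min ((ι a:ℕ):ℝ) ((ι b:ℕ):ℝ)) * lam a * lam b
      = ∑ t ∈ Finset.range T,
          (if t < ι a then lam a else 0) * (if t < ι b then lam b else 0) := by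
    intro a b
    have hminrep : (min ((ι a:ℕ):ℝ) ((ι b:ℕ):ℝ))
        = ∑ t ∈ Finset.range T,
            (if t < ι a then (1:ℝ) else 0) * (if t < ι b then (1:ℝ) else 0) := by
      have h1 : ∀ t, (if t < ι a then (1:ℝ) else 0) * (if t < ι b then (1:ℝ) else 0)
          = if t < min (ι a) (ι b) then (1:ℝ) else 0 := by
        intro t; by_cases h1 : t < ι a <;> by_cases h2 : t < ι b <;>
          simp [h1, h2, lt_min_iff]
      simp only [h1]
      rw [count_range T _ (le_of_lt (lt_of_le_of_lt (min_le_left _ _) (hT a)))]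
      exact (Nat.cast_min (ι a) (ι b)).symm
    rw [hminrep, Finset.sum_mul, Finset.sum_mul]
    apply Finset.sum_congr rfl
    intro t _
    by_cases h1 : t < ι a <;> by_cases h2 : t < ι b <;> simp [h1, h2]
  have hA : (∑ a, ∑ b, (min ((ι a:ℕ):ℝ) ((ι b:ℕ):ℝ)) * lam a * lam b)
      = ∑ t ∈ Finset.range T, (f t)^2 := by
    simp only [hkey]
    have hswap : ∀ a : Fin g, (∑ b, ∑ t ∈ Finset.range T,
        (if t < ι a then lam a else 0) * (if t < ι b then lam b else 0))
        = ∑ t ∈ Finset.range T, ∑ b,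
            (if t < ι a then lam a else 0) * (if t < ι b then lam b else 0) :=
      fun a => Finset.sum_comm
    simp only [hswap]
    rw [Finset.sum_comm]
    apply Finset.sum_congr rfl
    intro t _
    rw [← Finset.sum_mul_sum]
    rw [sq]
  -- Claim B
  have hB : ∀ a : Fin g, |lam a| ≤ 2 * S := by
    intro a
    have hfa : f (ι a - 1) - f (ι a) = lam a := by
      show (∑ b, (if ι a - 1 < ι b then lam b else 0))
          - (∑ b, (if ι a < ι b then lam b else 0)) = lam a
      rw [← Finset.sum_sub_distrib]
      have hpt : ∀ b : Fin g, ((if ι a - 1 < ι b then lam b else 0)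
          - (if ι a < ι b then lam b else 0)) = if b = a then lam b else 0 := by
        intro b
        have h1 := hιpos a
        by_cases h2 : b = a
        · subst h2
          have e1 : ι b - 1 < ι b := by omega
          simp [e1, lt_irrefl]
        · have hne : ι b ≠ ι a := fun h => h2 (hι.injective h)
          by_cases h3 : ι a < ι b
          · have e1 : ι a - 1 < ι b := by omega
            simp [h3, e1, h2]
          · have e1 : ¬(ι a - 1 < ι b) := by omega
            simp [h3, e1, h2]
      simp only [hpt]
      rw [Finset.sum_ite_eq' Finset.univ a lam]
      simp
    have h1 : |f (ι a - 1)| ≤ S :=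
      Finset.single_le_sum (fun t _ => abs_nonneg (f t))
        (Finset.mem_range.2 (by have := hT a; omega))
    have h2 : |f (ι a)| ≤ S :=
      Finset.single_le_sum (fun t _ => abs_nonneg (f t))
        (Finset.mem_range.2 (hT a))
    calc |lam a| = |f (ι a - 1) - f (ι a)| := by rw [hfa]
      _ ≤ |f (ι a - 1)| + |f (ι a)| := abs_sub _ _
      _ ≤ 2 * S := by linarith
  -- positivity of p-part
  have hP : 0 ≤ ∑ a, (p a:ℝ) * (lam a)^2/(2*(m a:ℝ)) := by
    apply Finset.sum_nonneg
    intro a _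
    have h1 : (0:ℝ) ≤ (p a:ℝ) := by exact_mod_cast hp a
    have h2 : (0:ℝ) ≤ (m a:ℝ) := Nat.cast_nonneg _
    positivity
  -- linear part lower bound
  have hlin : -(2 * S * Z) ≤ ∑ a, lam a * z a / (m a:ℝ) := by
    have hstep : ∀ a : Fin g, -(2 * S * |z a / (m a:ℝ)|) ≤ lam a * z a / (m a:ℝ) := by
      intro a
      have e1 : lam a * z a / (m a:ℝ) = lam a * (z a / (m a:ℝ)) := by ring
      have e2 : -(|lam a| * |z a / (m a:ℝ)|) ≤ lam a * (z a / (m a:ℝ)) := by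
        rw [← abs_mul]
        exact neg_abs_le _
      have e3 : |lam a| * |z a / (m a:ℝ)| ≤ 2 * S * |z a / (m a:ℝ)| :=
        mul_le_mul_of_nonneg_right (hB a) (abs_nonneg _)
      rw [e1]; linarith
    calc -(2 * S * Z) = ∑ a, -(2 * S * |z a / (m a:ℝ)|) := by
          rw [hZdef, Finset.mul_sum, ← Finset.sum_neg_distrib]
      _ ≤ ∑ a, lam a * z a / (m a:ℝ) := Finset.sum_le_sum fun a _ => hstep a
  -- quadratic part lower bound
  have hquad : 2 * Z * S - (T:ℝ) * Z^2 ≤ ∑ t ∈ Finset.range T, (f t)^2 := by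
    have hstep : ∀ t ∈ Finset.range T, 2 * Z * |f t| - Z^2 ≤ (f t)^2 := by
      intro t _
      nlinarith [sq_nonneg (|f t| - Z), sq_abs (f t)]
    calc 2 * Z * S - (T:ℝ) * Z^2
        = ∑ t ∈ Finset.range T, (2 * Z * |f t| - Z^2) := by
          rw [Finset.sum_sub_distrib, ← Finset.mul_sum, ← hSdef, Finset.sum_const,
            Finset.card_range, nsmul_eq_mul]
      _ ≤ ∑ t ∈ Finset.range T, (f t)^2 := Finset.sum_le_sum hstep
  rw [hA]
  nlinarith [hP, hlin, hquad]



lemma chi_sub_q (L g : ℕ) (ι m : Fin g → ℕ) (hm : ∀ a, 1 ≤ m a)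
    (Iv : (a : Fin g) → Fin (m a) → ℤ) (r k : ℤ)
    (s : ∀ a, Fin (m a)) (n : Fin g → ℤ) :
    ∃ N : ℤ, chi L g ι m Iv s
      - qform (periodMatrix L g ι m) (fun a => ((s a : ℕ):ℝ) / (m a : ℝ))
          (zvec L g ι m Iv r k) n = (N:ℝ) := by
  rw [qform_eval L g ι m hm (zvec L g ι m Iv r k) s n]
  choose E hE using fun a => per_index (m a) (hm a) (s a) (Iv a)
    (vacancy L g ι m a) (r * (ι a : ℤ) - k * ((min (ι a) 1 : ℕ) : ℤ)) (n a)
  refine ⟨(∑ a, E a) - ∑ a, ∑ b, (min (ι a) (ι b) : ℤ)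
      * ((m a : ℤ) * (n a) + ((s a : ℕ) : ℤ))
      * ((m b : ℤ) * (n b) + ((s b : ℕ) : ℤ)), ?_⟩
  have hz : ∀ a, zvec L g ι m Iv r k a = (∑ α : Fin (m a), (Iv a α : ℝ))
      + (m a : ℝ) * (((r * (ι a : ℤ) - k * ((min (ι a) 1 : ℕ) : ℤ) : ℤ) : ℝ)
        - (vacancy L g ι m a : ℝ)/2) := by
    intro a; simp only [zvec]; push_cast; ring
  have hE' : ∀ a : Fin g,
      (1/(m a : ℝ)) * (∑ α : Fin (m a), ∑ β : Fin (m a),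
          if (α : ℕ) < (s a : ℕ) ∧ (s a : ℕ) ≤ (β : ℕ) then
            (Iv a β : ℝ) - (Iv a α : ℝ) - (vacancy L g ι m a : ℝ)/2 else 0)
        - (vacancy L g ι m a : ℝ) * ((m a:ℝ)*(n a:ℝ) + ((s a:ℕ):ℝ))^2/(2*(m a:ℝ))
        - ((m a:ℝ)*(n a:ℝ) + ((s a:ℕ):ℝ)) * zvec L g ι m Iv r k a / (m a:ℝ)
      = ((E a : ℤ) : ℝ) := by
    intro a; rw [hz a]; exact hE a
  have hsplit : chi L g ι m Iv s
      - ((∑ a, (vacancy L g ι m a : ℝ) *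
            ((m a:ℝ)*(n a:ℝ) + ((s a:ℕ):ℝ))^2/(2*(m a:ℝ)))
        + (∑ a, ∑ b, (min ((ι a:ℕ):ℝ) ((ι b:ℕ):ℝ))
            * ((m a:ℝ)*(n a:ℝ) + ((s a:ℕ):ℝ)) * ((m b:ℝ)*(n b:ℝ) + ((s b:ℕ):ℝ)))
        + ∑ a, ((m a:ℝ)*(n a:ℝ) + ((s a:ℕ):ℝ)) * zvec L g ι m Iv r k a / (m a:ℝ))
      = (∑ a, ((1/(m a : ℝ)) * (∑ α : Fin (m a), ∑ β : Fin (m a),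
            if (α : ℕ) < (s a : ℕ) ∧ (s a : ℕ) ≤ (β : ℕ) then
              (Iv a β : ℝ) - (Iv a α : ℝ) - (vacancy L g ι m a : ℝ)/2 else 0)
          - (vacancy L g ι m a : ℝ) * ((m a:ℝ)*(n a:ℝ) + ((s a:ℕ):ℝ))^2/(2*(m a:ℝ))
          - ((m a:ℝ)*(n a:ℝ) + ((s a:ℕ):ℝ)) * zvec L g ι m Iv r k a / (m a:ℝ)))
        - (∑ a, ∑ b, (min ((ι a:ℕ):ℝ) ((ι b:ℕ):ℝ))
            * ((m a:ℝ)*(n a:ℝ) + ((s a:ℕ):ℝ)) * ((m b:ℝ)*(n b:ℝ) + ((s b:ℕ):ℝ))) := by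
    simp only [chi, Finset.sum_sub_distrib]
    ring
  rw [hsplit]
  rw [Finset.sum_congr rfl (fun a _ => hE' a)]
  have hc1 : (∑ a, ((E a : ℤ) : ℝ)) = ((∑ a, E a : ℤ) : ℝ) := by push_cast; rfl
  have hc2 : (∑ a, ∑ b, (min ((ι a:ℕ):ℝ) ((ι b:ℕ):ℝ))
        * ((m a:ℝ)*(n a:ℝ) + ((s a:ℕ):ℝ)) * ((m b:ℝ)*(n b:ℝ) + ((s b:ℕ):ℝ)))
      = ((∑ a, ∑ b, (min (ι a) (ι b) : ℤ)
          * ((m a : ℤ) * (n a) + ((s a : ℕ) : ℤ))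
          * ((m b : ℤ) * (n b) + ((s b : ℕ) : ℤ)) : ℤ) : ℝ) := by
    push_cast; rfl
  rw [hc1, hc2]
  push_cast
  ring


/-- The ultradiscrete tau function is integer-valued: for Bethe
data satisfying the configuration condition `p_i ≥ 0` and monotone integer angle
data, `τ_r(k) ∈ ℤ` for all `r, k ∈ ℤ`. -/
theorem tau_integer_valued (L g : ℕ) (hL : 0 < L) (ι : Fin g → ℕ)
    (hι : StrictMono ι) (hιpos : ∀ a, 0 < ι a) (m : Fin g → ℕ)
    (hm : ∀ a, 1 ≤ m a) (hconf : ∀ a, 0 ≤ vacancy L g ι m a)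
    (Iv : (a : Fin g) → Fin (m a) → ℤ) (hIv : ∀ a, Monotone (Iv a))
    (r k : ℤ) :
    ∃ n : ℤ, tau L g ι m Iv r k = (n : ℝ) := by
  set Ω := periodMatrix L g ι m with hΩ
  set z := zvec L g ι m Iv r k with hzv
  obtain ⟨c, hc⟩ := F_lower g ι hι hιpos m hm (vacancy L g ι m) hconf z
  have key : ∀ s : ∀ a, Fin (m a), ∃ N : ℤ,
      Theta Ω (fun a => ((s a : ℕ) : ℝ) / (m a : ℝ)) z + chi L g ι m Iv s
        = (N : ℝ) := by
    intro s
    set q : (Fin g → ℤ) → ℝ :=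
      qform Ω (fun a => ((s a : ℕ) : ℝ) / (m a : ℝ)) z with hq
    have hqlow : ∀ n : Fin g → ℤ, c ≤ q n := by
      intro n
      rw [hq, hΩ, hzv, qform_eval L g ι m hm _ s n]
      exact hc _
    have hint : ∀ n : Fin g → ℤ, ∃ N : ℤ, chi L g ι m Iv s - q n = (N : ℝ) :=
      fun n => chi_sub_q L g ι m hm Iv r k s n
    set P : ℤ → Prop := fun N => ∃ n : Fin g → ℤ, chi L g ι m Iv s - q n = (N : ℝ)
      with hP
    have hbdd : ∃ b : ℤ, ∀ N : ℤ, P N → N ≤ b := by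
      refine ⟨⌈chi L g ι m Iv s - c⌉, ?_⟩
      rintro N ⟨n, hn⟩
      have h1 : (N : ℝ) ≤ chi L g ι m Iv s - c := by
        have := hqlow n; linarith [hn]
      have h2 : (N : ℝ) ≤ (⌈chi L g ι m Iv s - c⌉ : ℝ) :=
        h1.trans (Int.le_ceil _)
      exact_mod_cast h2
    have hne : ∃ N : ℤ, P N := by
      obtain ⟨N, hN⟩ := hint 0
      exact ⟨N, 0, hN⟩
    obtain ⟨Nmax, ⟨n0, hn0⟩, hub⟩ := Int.exists_greatest_of_bdd hbdd hne
    have hleast : IsLeast (Set.range (qform Ω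
        (fun a => ((s a : ℕ) : ℝ) / (m a : ℝ)) z))
        (chi L g ι m Iv s - (Nmax : ℝ)) := by
      constructor
      · exact ⟨n0, by rw [← hq]; linarith [hn0]⟩
      · rintro y ⟨n, rfl⟩
        obtain ⟨N, hN⟩ := hint n
        have hNle : N ≤ Nmax := hub N ⟨n, hN⟩
        have : (N : ℝ) ≤ (Nmax : ℝ) := by exact_mod_cast hNle
        have : qform Ω (fun a => ((s a : ℕ) : ℝ) / (m a : ℝ)) z n = q n := rfl
        linarith [hN]
    refine ⟨Nmax, ?_⟩
    rw [Theta, hleast.csInf_eq]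
    ring
  choose Nf hNf using key
  have hne : Nonempty (∀ a, Fin (m a)) := ⟨fun a => ⟨0, hm a⟩⟩
  set G : (∀ a, Fin (m a)) → ℝ := fun s =>
    Theta Ω (fun a => ((s a : ℕ) : ℝ) / (m a : ℝ)) z + chi L g ι m Iv s with hG
  obtain ⟨s0, hmax⟩ := Finite.exists_max G
  have hbdd : BddAbove (Set.range G) := (Set.finite_range G).bddAbove
  have htau : tau L g ι m Iv r k = G s0 := by
    rw [tau]
    exact le_antisymm (ciSup_le fun s => hmax s) (le_ciSup hbdd s0)
  exact ⟨Nf s0, by rw [htau]; exact hNf s0⟩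
end

section
/- Fix Bethe data (L; i_1 < ... < i_g; m_i ≥ 1) satisfying the configuration condition p_i ≥ 0 for all i ∈ 𝕀, and integer angle data I_{i,1} ≤ ... ≤ I_{i,m_i} for each i ∈ 𝕀, with associated ultradiscrete tau function τ_r(k) and x_{k,r} = τ_r(k) - τ_r(k-1) - τ_{r+1}(k) + τ_{r+1}(k-1). Then x_{k,r} is periodic in k with period L: x_{k+L,r} = x_{k,r} for all k, r ∈ ℤ. (This follows from the quasi-periodicity of Θ together with the identity Ω h_1 = L M h_1.) -/
open Matrix

lemma sInf_image_sub (S : Set ℝ) (hne : S.Nonempty) (hbd : BddBelow S) (c : ℝ) :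
    sInf ((fun t => t - c) '' S) = sInf S - c := by
  have h := (OrderIso.addRight (-c) : ℝ ≃o ℝ).map_csInf' hne hbd
  simp only [OrderIso.addRight_apply] at h
  simp only [sub_eq_add_neg]
  exact h.symm

lemma min_sum_pos {g : ℕ} (ι : Fin g → ℕ) (hι : StrictMono ι) (hιpos : ∀ a, 0 < ι a)
    (y : Fin g → ℝ) (hy : y ≠ 0) :
    0 < ∑ a : Fin g, ∑ b : Fin g, (min (ι a) (ι b) : ℝ) * y a * y b := by
  classical
  set N := Finset.univ.sup ι with hN
  have hle : ∀ a, ι a ≤ N := fun a => Finset.le_sup (Finset.mem_univ a)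
  have key : ∀ a b : Fin g, ((ι a : ℝ) ⊓ (ι b : ℝ))
      = ∑ t ∈ Finset.range N, (if t < ι a then (1:ℝ) else 0) * (if t < ι b then 1 else 0) := by
    intro a b
    rw [← Nat.cast_min]
    have h1 : ∀ t, (if t < ι a then (1:ℝ) else 0) * (if t < ι b then 1 else 0)
        = if t < min (ι a) (ι b) then 1 else 0 := by
      intro t; by_cases h1 : t < ι a <;> by_cases h2 : t < ι b <;>
        simp [h1, h2, lt_min_iff]
    rw [Finset.sum_congr rfl fun t _ => h1 t, Finset.sum_boole]
    have : (Finset.range N).filter (fun t => t < min (ι a) (ι b)) =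
        Finset.range (min (ι a) (ι b)) := by
      ext t
      simp only [Finset.mem_filter, Finset.mem_range]
      have := hle a
      omega
    rw [this]
    simp
  have e1 : ∀ a b : Fin g, ((ι a : ℝ) ⊓ (ι b : ℝ)) * y a * y b
      = ∑ t ∈ Finset.range N,
          ((if t < ι a then (1:ℝ) else 0) * y a) * ((if t < ι b then (1:ℝ) else 0) * y b) := by
    intro a b
    rw [key a b, Finset.sum_mul, Finset.sum_mul]
    exact Finset.sum_congr rfl fun t _ => by ring
  have hswap : ∑ a : Fin g, ∑ b : Fin g, ((ι a : ℝ) ⊓ (ι b : ℝ)) * y a * y b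
      = ∑ t ∈ Finset.range N, (∑ a : Fin g, (if t < ι a then (1:ℝ) else 0) * y a) ^ 2 := by
    calc ∑ a : Fin g, ∑ b : Fin g, ((ι a : ℝ) ⊓ (ι b : ℝ)) * y a * y b
        = ∑ a : Fin g, ∑ b : Fin g, ∑ t ∈ Finset.range N,
            ((if t < ι a then (1:ℝ) else 0) * y a) * ((if t < ι b then (1:ℝ) else 0) * y b) :=
          Finset.sum_congr rfl fun a _ => Finset.sum_congr rfl fun b _ => e1 a b
      _ = ∑ a : Fin g, ∑ t ∈ Finset.range N, ∑ b : Fin g,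
            ((if t < ι a then (1:ℝ) else 0) * y a) * ((if t < ι b then (1:ℝ) else 0) * y b) :=
          Finset.sum_congr rfl fun a _ => Finset.sum_comm
      _ = ∑ t ∈ Finset.range N, ∑ a : Fin g, ∑ b : Fin g,
            ((if t < ι a then (1:ℝ) else 0) * y a) * ((if t < ι b then (1:ℝ) else 0) * y b) :=
          Finset.sum_comm
      _ = ∑ t ∈ Finset.range N, (∑ a : Fin g, (if t < ι a then (1:ℝ) else 0) * y a) ^ 2 := by
          refine Finset.sum_congr rfl fun t _ => ?_
          rw [sq, Finset.sum_mul_sum]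
  rw [hswap]
  have hex : ∃ a, y a ≠ 0 := by
    by_contra h
    push_neg at h
    exact hy (funext fun a => h a)
  set F : Finset (Fin g) := Finset.univ.filter (fun a => y a ≠ 0) with hF
  have hFne : F.Nonempty := by
    obtain ⟨a, ha⟩ := hex
    exact ⟨a, by simp [hF, ha]⟩
  set A := F.max' hFne with hA
  have hAy : y A ≠ 0 := by
    have := F.max'_mem hFne
    simp [hF] at this
    exact this
  have hmax : ∀ a, A < a → y a = 0 := by
    intro a ha
    by_contra h
    exact absurd (F.le_max' a (by simp [hF, h])) (not_le.mpr ha)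
  set t₀ := ι A - 1 with ht₀
  have ht₀mem : t₀ ∈ Finset.range N := by
    rw [Finset.mem_range]
    have := hle A
    have := hιpos A
    omega
  have hterm : (∑ a : Fin g, (if t₀ < ι a then (1:ℝ) else 0) * y a) = y A := by
    have h0 : ∀ a : Fin g, (if t₀ < ι a then (1:ℝ) else 0) * y a
        = if a = A then y A else 0 := by
      intro a
      rcases lt_trichotomy a A with h | h | h
      · have h2 : ι a < ι A := hι h
        have hc : ¬ t₀ < ι a := by omega
        simp [hc, ne_of_lt h]
      · have hc : t₀ < ι a := by rw [h]; have := hιpos A; omega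
        rw [h] at hc ⊢
        rw [if_pos hc, if_pos rfl, one_mul]
      · have hc : y a = 0 := hmax a h
        simp [hc, h.ne']
    rw [Finset.sum_congr rfl fun a _ => h0 a, Finset.sum_ite_eq']
    simp
  have hpos : 0 < (∑ a : Fin g, (if t₀ < ι a then (1:ℝ) else 0) * y a) ^ 2 := by
    rw [hterm]; positivity
  calc (0:ℝ) < (∑ a : Fin g, (if t₀ < ι a then (1:ℝ) else 0) * y a) ^ 2 := hpos
    _ ≤ _ := Finset.single_le_sum
        (f := fun t => (∑ a : Fin g, (if t < ι a then (1:ℝ) else 0) * y a) ^ 2)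
        (fun t _ => sq_nonneg _) ht₀mem

lemma periodMatrix_posDef (L g : ℕ) (ι m : Fin g → ℕ) (hι : StrictMono ι)
    (hιpos : ∀ a, 0 < ι a) (hm : ∀ a, 1 ≤ m a) (hconf : ∀ a, 0 ≤ vacancy L g ι m a) :
    (periodMatrix L g ι m).PosDef := by
  classical
  refine Matrix.posDef_iff_dotProduct_mulVec.mpr ⟨?_, ?_⟩
  · rw [Matrix.IsHermitian, Matrix.conjTranspose_eq_transpose_of_trivial]
    ext a b
    simp only [Matrix.transpose_apply, periodMatrix, Matrix.of_apply]
    by_cases h : a = b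
    · subst h; ring
    · simp only [h, Ne.symm h, if_false]
      rw [min_comm]
      ring
  · intro x hx
    have hsx : star x = x := by
      funext i; simp
    rw [hsx]
    have expand : x ⬝ᵥ (periodMatrix L g ι m) *ᵥ x
        = (∑ a : Fin g, (vacancy L g ι m a : ℝ) * m a * (x a * x a))
          + ∑ a : Fin g, ∑ b : Fin g,
              ((ι a : ℝ) ⊓ (ι b : ℝ)) * ((m a : ℝ) * x a) * ((m b : ℝ) * x b)
          + ∑ a : Fin g, ∑ b : Fin g,
              ((ι a : ℝ) ⊓ (ι b : ℝ)) * ((m a : ℝ) * x a) * ((m b : ℝ) * x b) := by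
      simp only [dotProduct, Matrix.mulVec, periodMatrix, Matrix.of_apply, dotProduct]
      have h1 : ∀ a : Fin g,
          x a * (∑ b : Fin g, ((if a = b then (vacancy L g ι m a : ℝ) * m a else 0)
            + 2 * ((ι a : ℝ) ⊓ (ι b : ℝ)) * m a * m b) * x b)
          = (vacancy L g ι m a : ℝ) * m a * (x a * x a)
            + ∑ b : Fin g, (((ι a : ℝ) ⊓ (ι b : ℝ)) * ((m a : ℝ) * x a) * ((m b : ℝ) * x b)
              + ((ι a : ℝ) ⊓ (ι b : ℝ)) * ((m a : ℝ) * x a) * ((m b : ℝ) * x b)) := by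
        intro a
        rw [Finset.mul_sum]
        have h2 : ∀ b : Fin g,
            x a * (((if a = b then (vacancy L g ι m a : ℝ) * m a else 0)
              + 2 * ((ι a : ℝ) ⊓ (ι b : ℝ)) * m a * m b) * x b)
            = (if a = b then (vacancy L g ι m a : ℝ) * m a * (x a * x b) else 0)
              + (((ι a : ℝ) ⊓ (ι b : ℝ)) * ((m a : ℝ) * x a) * ((m b : ℝ) * x b)
                + ((ι a : ℝ) ⊓ (ι b : ℝ)) * ((m a : ℝ) * x a) * ((m b : ℝ) * x b)) := by
          intro b
          by_cases h : a = b
          · simp only [h, if_true]; ring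
          · simp only [h, if_false]; ring
        rw [Finset.sum_congr rfl fun b _ => h2 b, Finset.sum_add_distrib,
          Finset.sum_ite_eq]
        simp
      rw [Finset.sum_congr rfl fun a _ => h1 a, Finset.sum_add_distrib]
      rw [Finset.sum_congr rfl fun a _ => Finset.sum_add_distrib
        (s := (Finset.univ : Finset (Fin g)))]
      rw [Finset.sum_add_distrib]
      ring
    rw [expand]
    have hy : (fun a : Fin g => (m a : ℝ) * x a) ≠ 0 := by
      intro h
      apply hx
      funext a
      have := congrFun h a
      simp only [Pi.zero_apply] at this ⊢
      have hma : ((m a : ℝ)) ≠ 0 := by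
        have := hm a; positivity
      exact (mul_eq_zero.mp this).resolve_left hma
    have hpos := min_sum_pos ι hι hιpos (fun a => (m a : ℝ) * x a) hy
    have h0 : 0 ≤ ∑ a : Fin g, (vacancy L g ι m a : ℝ) * m a * (x a * x a) := by
      apply Finset.sum_nonneg
      intro a _
      have h1 : (0:ℝ) ≤ (vacancy L g ι m a : ℝ) := by exact_mod_cast hconf a
      have h2 : (0:ℝ) ≤ (m a : ℝ) := by positivity
      exact mul_nonneg (mul_nonneg h1 h2) (mul_self_nonneg _)
    have := add_pos_of_nonneg_of_pos h0 (by linarith : (0:ℝ) <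
      (∑ a : Fin g, ∑ b : Fin g,
        ((ι a : ℝ) ⊓ (ι b : ℝ)) * ((m a : ℝ) * x a) * ((m b : ℝ) * x b))
      + ∑ a : Fin g, ∑ b : Fin g,
        ((ι a : ℝ) ⊓ (ι b : ℝ)) * ((m a : ℝ) * x a) * ((m b : ℝ) * x b))
    linarith

lemma dot_sym {g : ℕ} {Ω : Matrix (Fin g) (Fin g) ℝ} (h : Ωᵀ = Ω) (v w : Fin g → ℝ) :
    v ⬝ᵥ Ω *ᵥ w = w ⬝ᵥ Ω *ᵥ v := by
  rw [Matrix.dotProduct_mulVec, ← Matrix.mulVec_transpose, h]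
  exact dotProduct_comm _ _

lemma dot_expand {g : ℕ} {Ω : Matrix (Fin g) (Fin g) ℝ} (h : Ωᵀ = Ω) (v w : Fin g → ℝ) :
    (v + w) ⬝ᵥ Ω *ᵥ (v + w)
      = v ⬝ᵥ Ω *ᵥ v + 2 * (v ⬝ᵥ Ω *ᵥ w) + w ⬝ᵥ Ω *ᵥ w := by
  rw [Matrix.mulVec_add, dotProduct_add, add_dotProduct, add_dotProduct, dot_sym h w v]
  ring

lemma bddBelow_range_qform {g : ℕ} {Ω : Matrix (Fin g) (Fin g) ℝ} (hΩ : Ω.PosDef)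
    (a z : Fin g → ℝ) : BddBelow (Set.range (qform Ω a z)) := by
  classical
  have hdet : IsUnit Ω.det := hΩ.det_pos.ne'.isUnit
  set u := Ω⁻¹ *ᵥ z with hu
  have hΩu : Ω *ᵥ u = z := by
    rw [hu, Matrix.mulVec_mulVec, Matrix.mul_nonsing_inv _ hdet, Matrix.one_mulVec]
  have hsym : Ωᵀ = Ω := by
    rw [← Matrix.conjTranspose_eq_transpose_of_trivial]; exact hΩ.1
  have hb : ∀ x : Fin g → ℝ, -(u ⬝ᵥ z) / 2 ≤ (x ⬝ᵥ Ω *ᵥ x) / 2 + x ⬝ᵥ z := by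
    intro x
    have h0 : 0 ≤ (x + u) ⬝ᵥ Ω *ᵥ (x + u) := by
      have := hΩ.posSemidef.dotProduct_mulVec_nonneg (x + u)
      simpa using this
    have hx2 : x ⬝ᵥ Ω *ᵥ u = x ⬝ᵥ z := by rw [hΩu]
    have huu : u ⬝ᵥ Ω *ᵥ u = u ⬝ᵥ z := by rw [hΩu]
    rw [dot_expand hsym x u, hx2, huu] at h0
    linarith
  refine ⟨-(u ⬝ᵥ z) / 2, ?_⟩
  rintro t ⟨n, rfl⟩
  simpa [qform] using hb ((fun i => ((n i : ℝ))) + a)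

lemma Theta_shift {g : ℕ} {Ω : Matrix (Fin g) (Fin g) ℝ} (hΩ : Ω.PosDef)
    (a z : Fin g → ℝ) (l : Fin g → ℤ) :
    Theta Ω a (z + Ω *ᵥ (fun i => (l i : ℝ)))
      = Theta Ω a z + ((((fun i => (l i : ℝ)) ⬝ᵥ Ω *ᵥ (fun i => (l i : ℝ))) / 2)
          + (fun i => (l i : ℝ)) ⬝ᵥ z) := by
  classical
  have hsymM : Ωᵀ = Ω := by
    rw [← Matrix.conjTranspose_eq_transpose_of_trivial]; exact hΩ.1
  set lc : Fin g → ℝ := fun i => (l i : ℝ) with hlc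
  set c : ℝ := (lc ⬝ᵥ Ω *ᵥ lc) / 2 + lc ⬝ᵥ z with hc
  have habs : ∀ x : Fin g → ℝ,
      (x ⬝ᵥ Ω *ᵥ x) / 2 + x ⬝ᵥ (z + Ω *ᵥ lc)
        = (((x + lc) ⬝ᵥ Ω *ᵥ (x + lc)) / 2 + (x + lc) ⬝ᵥ z) - c := by
    intro x
    rw [dot_expand hsymM x lc, dotProduct_add x z, add_dotProduct x lc z, hc]
    ring
  have hpoint : ∀ n : Fin g → ℤ, qform Ω a (z + Ω *ᵥ lc) n = qform Ω a z (n + l) - c := by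
    intro n
    have hv : (fun i => (((n + l) i : ℤ) : ℝ)) + a = ((fun i => ((n i : ℝ))) + a) + lc := by
      funext i
      simp only [Pi.add_apply, hlc]
      push_cast
      ring
    simp only [qform]
    rw [hv]
    exact habs _
  have hrange : Set.range (qform Ω a (z + Ω *ᵥ lc))
      = (fun t => t - c) '' Set.range (qform Ω a z) := by
    ext t
    simp only [Set.mem_image, Set.mem_range]
    constructor
    · rintro ⟨n, rfl⟩
      exact ⟨qform Ω a z (n + l), ⟨n + l, rfl⟩, (hpoint n).symm⟩
    · rintro ⟨t', ⟨n, rfl⟩, rfl⟩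
      refine ⟨n - l, ?_⟩
      rw [hpoint (n - l)]
      congr 2
      funext i
      simp
  have hne : (Set.range (qform Ω a z)).Nonempty := Set.range_nonempty _
  have hbd := bddBelow_range_qform hΩ a z
  rw [Theta, hrange, sInf_image_sub _ hne hbd, Theta, hc]
  ring

lemma zvec_shift (L g : ℕ) (ι m : Fin g → ℕ) (hιpos : ∀ a, 0 < ι a)
    (Iv : (a : Fin g) → Fin (m a) → ℤ) (r k : ℤ) :
    zvec L g ι m Iv r (k + L) = zvec L g ι m Iv r k
      + (periodMatrix L g ι m) *ᵥ (fun _ => (((-1 : ℤ)) : ℝ)) := by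
  classical
  funext a
  have hmv : ((periodMatrix L g ι m) *ᵥ (fun _ => (((-1 : ℤ)) : ℝ))) a
      = -((m a : ℝ) * L) := by
    simp only [Matrix.mulVec, dotProduct, periodMatrix, Matrix.of_apply]
    have h1 : ∀ b : Fin g,
        ((if a = b then (vacancy L g ι m a : ℝ) * m a else 0)
          + 2 * ((ι a : ℝ) ⊓ (ι b : ℝ)) * m a * m b) * (((-1 : ℤ)) : ℝ)
        = (if a = b then (vacancy L g ι m a : ℝ) * m a * (-1) else 0)
          + (-2 * (m a : ℝ)) * (((ι a : ℝ) ⊓ (ι b : ℝ)) * m b) := by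
      intro b
      by_cases h : a = b
      · simp only [h, if_true]; push_cast; ring
      · simp only [h, if_false]; push_cast; ring
    rw [Finset.sum_congr rfl fun b _ => h1 b, Finset.sum_add_distrib, Finset.sum_ite_eq,
      ← Finset.mul_sum]
    have hvac : (vacancy L g ι m a : ℝ)
        = (L : ℝ) - 2 * ∑ b : Fin g, ((ι a : ℝ) ⊓ (ι b : ℝ)) * (m b : ℝ) := by
      simp only [vacancy]
      push_cast
      ring
    rw [hvac]
    simp only [Finset.mem_univ, if_true]
    ring
  simp only [Pi.add_apply, hmv, zvec]
  have h1 : min (ι a) 1 = 1 := min_eq_right (hιpos a)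
  rw [h1]
  push_cast
  ring

lemma tau_shift (L g : ℕ) (ι : Fin g → ℕ) (hι : StrictMono ι) (hιpos : ∀ a, 0 < ι a)
    (m : Fin g → ℕ) (hm : ∀ a, 1 ≤ m a) (hconf : ∀ a, 0 ≤ vacancy L g ι m a)
    (Iv : (a : Fin g) → Fin (m a) → ℤ) (r k : ℤ) :
    tau L g ι m Iv r (k + L) = tau L g ι m Iv r k
      + ((((fun _ : Fin g => ((-1 : ℤ) : ℝ)) ⬝ᵥ
            (periodMatrix L g ι m) *ᵥ (fun _ : Fin g => ((-1 : ℤ) : ℝ))) / 2)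
          + (fun _ : Fin g => ((-1 : ℤ) : ℝ)) ⬝ᵥ zvec L g ι m Iv r k) := by
  classical
  have hΩ := periodMatrix_posDef L g ι m hι hιpos hm hconf
  have hz := zvec_shift L g ι m hιpos Iv r k
  haveI : Nonempty (∀ a : Fin g, Fin (m a)) := ⟨fun a => ⟨0, hm a⟩⟩
  set C : ℝ := (((fun _ : Fin g => ((-1 : ℤ) : ℝ)) ⬝ᵥ
      (periodMatrix L g ι m) *ᵥ (fun _ : Fin g => ((-1 : ℤ) : ℝ))) / 2)
      + (fun _ : Fin g => ((-1 : ℤ) : ℝ)) ⬝ᵥ zvec L g ι m Iv r k with hC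
  have hfun : (fun s : (∀ a, Fin (m a)) =>
        Theta (periodMatrix L g ι m) (fun a => ((s a : ℕ) : ℝ) / (m a : ℝ))
          (zvec L g ι m Iv r (k + L)) + chi L g ι m Iv s)
      = (fun s : (∀ a, Fin (m a)) =>
          (Theta (periodMatrix L g ι m) (fun a => ((s a : ℕ) : ℝ) / (m a : ℝ))
            (zvec L g ι m Iv r k) + chi L g ι m Iv s) + C) := by
    funext s
    rw [hz]
    have ht := Theta_shift hΩ (fun a => ((s a : ℕ) : ℝ) / (m a : ℝ))
      (zvec L g ι m Iv r k) (fun _ => (-1 : ℤ))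
    beta_reduce at ht
    rw [ht, hC]
    ring
  simp only [tau]
  rw [hfun]
  have hbdd : BddAbove (Set.range (fun s : (∀ a, Fin (m a)) =>
      Theta (periodMatrix L g ι m) (fun a => ((s a : ℕ) : ℝ) / (m a : ℝ))
        (zvec L g ι m Iv r k) + chi L g ι m Iv s)) :=
    Set.Finite.bddAbove (Set.finite_range _)
  have hmap := (OrderIso.addRight C : ℝ ≃o ℝ).map_ciSup hbdd
  simp only [OrderIso.addRight_apply] at hmap
  exact hmap.symm

/-- For Bethe data satisfying the configuration condition
`p_i ≥ 0` and monotone integer angle data, the second difference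
`x_{k,r} = τ_r(k) - τ_r(k-1) - τ_{r+1}(k) + τ_{r+1}(k-1)` is periodic in `k` with
period `L`: `x_{k+L,r} = x_{k,r}` for all `k, r ∈ ℤ`.  (This follows from the
quasi-periodicity of `Θ` together with the identity `Ω h₁ = L M h₁`.) -/
theorem tau_second_difference_periodic (L g : ℕ) (hL : 0 < L) (ι : Fin g → ℕ)
    (hι : StrictMono ι) (hιpos : ∀ a, 0 < ι a) (m : Fin g → ℕ)
    (hm : ∀ a, 1 ≤ m a) (hconf : ∀ a, 0 ≤ vacancy L g ι m a)
    (Iv : (a : Fin g) → Fin (m a) → ℤ) (hIv : ∀ a, Monotone (Iv a))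
    (k r : ℤ) :
    tau L g ι m Iv r (k + L) - tau L g ι m Iv r (k + L - 1) -
        tau L g ι m Iv (r + 1) (k + L) + tau L g ι m Iv (r + 1) (k + L - 1) =
      tau L g ι m Iv r k - tau L g ι m Iv r (k - 1) -
        tau L g ι m Iv (r + 1) k + tau L g ι m Iv (r + 1) (k - 1) := by
  have hshift := tau_shift L g ι hι hιpos m hm hconf Iv
  rw [show k + (L : ℤ) - 1 = (k - 1) + L by ring]
  rw [hshift r k, hshift r (k - 1), hshift (r + 1) k, hshift (r + 1) (k - 1)]
  have hsum : ∀ w : Fin g → ℝ, (fun _ : Fin g => ((-1 : ℤ) : ℝ)) ⬝ᵥ w = -∑ a : Fin g, w a := by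
    intro w
    simp [dotProduct]
  have hz0 : ∑ a : Fin g, zvec L g ι m Iv r k a - ∑ a : Fin g, zvec L g ι m Iv r (k - 1) a -
      ∑ a : Fin g, zvec L g ι m Iv (r + 1) k a + ∑ a : Fin g, zvec L g ι m Iv (r + 1) (k - 1) a
      = 0 := by
    rw [← Finset.sum_sub_distrib, ← Finset.sum_sub_distrib, ← Finset.sum_add_distrib]
    apply Finset.sum_eq_zero
    intro a _
    simp only [zvec]
    push_cast
    ring
  simp only [hsum]
  linarith
end
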